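/- Any real quadratic form P in 5 variables that vanishes on the union of the ten circles S₁^±,…,S₅^± (the spherical zero set of the Choi–Lam form H(x) = h(x₁²,…,x₅²)) is identically zero. -/

import Mathlib

open MvPolynomial

/-- Membership in the union of the ten circles `S₁^± ∪ ⋯ ∪ S₅^±` in `S⁴ ⊂ ℝ⁵`:
`S₁^± = {(±1/√2, a, 0, 0, b) : a² + b² = 1/2}` and its cyclic shifts. -/
def inTenCircles (x : Fin 5 → ℝ) : Prop :=
  ∃ j : Fin 5, ∃ ε : ℝ, (ε = 1 ∨ ε = -1) ∧ x j = ε / Real.sqrt 2 ∧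
    x (j + 2) = 0 ∧ x (j + 3) = 0 ∧ (x (j + 1)) ^ 2 + (x (j + 4)) ^ 2 = 1 / 2

set_option maxRecDepth 40000

attribute [local simp] Matrix.cons_val_two Matrix.cons_val_three Matrix.cons_val_four

open MvPolynomial

private lemma pairD' : ∀ v : Fin 5 → Fin 3, ((v 0 : ℕ) + v 1 + v 2 + v 3 + v 4 = 2) →
    ∃ i j : Fin 5, i ≤ j ∧ ∀ k, (v k : ℕ) = (if i = k then 1 else 0) + (if j = k then 1 else 0) := by
  decide

private lemma injD' : ∀ i j k l : Fin 5, i ≤ j → k ≤ l →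
    (∀ t, (if i = t then (1:ℕ) else 0) + (if j = t then 1 else 0)
        = (if k = t then 1 else 0) + (if l = t then 1 else 0)) → i = k ∧ j = l := by
  decide

private lemma classify' (m : Fin 5 →₀ ℕ) (hm : ∑ i, m i = 2) :
    ∃ i j : Fin 5, i ≤ j ∧ m = Finsupp.single i 1 + Finsupp.single j 1 := by
  have hb : ∀ k, m k < 3 := by
    intro k
    have : m k ≤ ∑ i, m i := Finset.single_le_sum (fun i _ => Nat.zero_le _) (Finset.mem_univ k)
    omega
  have hsum : m 0 + m 1 + m 2 + m 3 + m 4 = 2 := by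
    rw [← hm, Fin.sum_univ_five]
  obtain ⟨i, j, hij, h⟩ := pairD' (fun k => ⟨m k, hb k⟩) (by simpa using hsum)
  refine ⟨i, j, hij, Finsupp.ext fun k => ?_⟩
  have := h k
  simpa [Finsupp.single_apply] using this

private lemma prodsingle' (x : Fin 5 → ℝ) (i : Fin 5) :
    ∏ k, x k ^ (Finsupp.single i 1) k = x i := by
  rw [Finset.prod_eq_single i (fun b _ hb => by simp [Finsupp.single_apply, Ne.symm hb])
    (fun h => absurd (Finset.mem_univ i) h)]
  simp

private lemma prodpow' (x : Fin 5 → ℝ) (i j : Fin 5) :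
    ∏ k, x k ^ ((Finsupp.single i 1 + Finsupp.single j 1 : Fin 5 →₀ ℕ) k) = x i * x j := by
  simp only [Finsupp.add_apply, pow_add, Finset.prod_mul_distrib, prodsingle']

private lemma rep' (P : MvPolynomial (Fin 5) ℝ) (hP : P.IsHomogeneous 2) (x : Fin 5 → ℝ) :
    eval x P = ∑ p ∈ Finset.univ.filter (fun p : Fin 5 × Fin 5 => p.1 ≤ p.2),
      coeff (Finsupp.single p.1 1 + Finsupp.single p.2 1) P * (x p.1 * x p.2) := by
  classical
  have hinj : ∀ p ∈ Finset.univ.filter (fun p : Fin 5 × Fin 5 => p.1 ≤ p.2),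
      ∀ q ∈ Finset.univ.filter (fun p : Fin 5 × Fin 5 => p.1 ≤ p.2),
      (Finsupp.single p.1 1 + Finsupp.single p.2 1 : Fin 5 →₀ ℕ)
        = Finsupp.single q.1 1 + Finsupp.single q.2 1 → p = q := by
    intro p hp q hq h
    have h1 : p.1 ≤ p.2 := (Finset.mem_filter.mp hp).2
    have h2 : q.1 ≤ q.2 := (Finset.mem_filter.mp hq).2
    have := injD' p.1 p.2 q.1 q.2 h1 h2 (fun t => by
      have := DFunLike.congr_fun h t
      simpa [Finsupp.single_apply] using this)
    exact Prod.ext this.1 this.2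
  have himg := Finset.sum_image (s := Finset.univ.filter (fun p : Fin 5 × Fin 5 => p.1 ≤ p.2))
    (g := fun p : Fin 5 × Fin 5 => (Finsupp.single p.1 1 + Finsupp.single p.2 1 : Fin 5 →₀ ℕ))
    (f := fun m : Fin 5 →₀ ℕ => coeff m P * ∏ k, x k ^ m k) hinj
  rw [eval_eq']
  rw [show (∑ p ∈ Finset.univ.filter (fun p : Fin 5 × Fin 5 => p.1 ≤ p.2),
      coeff (Finsupp.single p.1 1 + Finsupp.single p.2 1) P * (x p.1 * x p.2))
    = ∑ p ∈ Finset.univ.filter (fun p : Fin 5 × Fin 5 => p.1 ≤ p.2),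
      coeff (Finsupp.single p.1 1 + Finsupp.single p.2 1) P
        * ∏ k, x k ^ ((Finsupp.single p.1 1 + Finsupp.single p.2 1 : Fin 5 →₀ ℕ) k)
    from Finset.sum_congr rfl fun p _ => by rw [prodpow']]
  rw [← himg]
  apply Finset.sum_subset
  · intro m hm
    have hdeg : ∑ i, m i = 2 := by
      have h2 : m.degree = 2 := by
        rw [Finsupp.degree_eq_weight_one]; exact hP (mem_support_iff.mp hm)
      rw [← h2, Finsupp.degree]
      exact (Finset.sum_subset (Finset.subset_univ _) (by simp)).symm
    obtain ⟨i, j, hij, hm'⟩ := classify' m hdeg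
    exact Finset.mem_image.mpr ⟨(i, j), Finset.mem_filter.mpr ⟨Finset.mem_univ _, hij⟩, hm'.symm⟩
  · intro m _ hm
    rw [notMem_support_iff.mp hm, zero_mul]

private lemma sumpairs' (f : Fin 5 × Fin 5 → ℝ) :
    ∑ p ∈ Finset.univ.filter (fun p : Fin 5 × Fin 5 => p.1 ≤ p.2), f p
    = f (0,0) + f (0,1) + f (0,2) + f (0,3) + f (0,4) + f (1,1) + f (1,2) + f (1,3) + f (1,4) + f (2,2) + f (2,3) + f (2,4) + f (3,3) + f (3,4) + f (4,4) := by
  rw [Finset.sum_filter, Fintype.sum_prod_type]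
  simp only [Fin.sum_univ_five]
  simp only [eq_true (show ((0:Fin 5) ≤ 0) by decide),
    eq_true (show ((0:Fin 5) ≤ 1) by decide),
    eq_true (show ((0:Fin 5) ≤ 2) by decide),
    eq_true (show ((0:Fin 5) ≤ 3) by decide),
    eq_true (show ((0:Fin 5) ≤ 4) by decide),
    eq_false (show ¬((1:Fin 5) ≤ 0) by decide),
    eq_true (show ((1:Fin 5) ≤ 1) by decide),
    eq_true (show ((1:Fin 5) ≤ 2) by decide),
    eq_true (show ((1:Fin 5) ≤ 3) by decide),
    eq_true (show ((1:Fin 5) ≤ 4) by decide),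
    eq_false (show ¬((2:Fin 5) ≤ 0) by decide),
    eq_false (show ¬((2:Fin 5) ≤ 1) by decide),
    eq_true (show ((2:Fin 5) ≤ 2) by decide),
    eq_true (show ((2:Fin 5) ≤ 3) by decide),
    eq_true (show ((2:Fin 5) ≤ 4) by decide),
    eq_false (show ¬((3:Fin 5) ≤ 0) by decide),
    eq_false (show ¬((3:Fin 5) ≤ 1) by decide),
    eq_false (show ¬((3:Fin 5) ≤ 2) by decide),
    eq_true (show ((3:Fin 5) ≤ 3) by decide),
    eq_true (show ((3:Fin 5) ≤ 4) by decide),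
    eq_false (show ¬((4:Fin 5) ≤ 0) by decide),
    eq_false (show ¬((4:Fin 5) ≤ 1) by decide),
    eq_false (show ¬((4:Fin 5) ≤ 2) by decide),
    eq_false (show ¬((4:Fin 5) ≤ 3) by decide),
    eq_true (show ((4:Fin 5) ≤ 4) by decide),
    if_true, if_false]
  ring

/-- coefficient extractor -/
noncomputable def cf (P : MvPolynomial (Fin 5) ℝ) (i j : Fin 5) : ℝ :=
  coeff (Finsupp.single i 1 + Finsupp.single j 1) P

private lemma hrep' (P : MvPolynomial (Fin 5) ℝ) (hP : P.IsHomogeneous 2) (x : Fin 5 → ℝ) :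
    eval x P = cf P 0 0 * (x 0 * x 0) + cf P 0 1 * (x 0 * x 1) + cf P 0 2 * (x 0 * x 2) + cf P 0 3 * (x 0 * x 3) + cf P 0 4 * (x 0 * x 4) + cf P 1 1 * (x 1 * x 1) + cf P 1 2 * (x 1 * x 2) + cf P 1 3 * (x 1 * x 3) + cf P 1 4 * (x 1 * x 4) + cf P 2 2 * (x 2 * x 2) + cf P 2 3 * (x 2 * x 3) + cf P 2 4 * (x 2 * x 4) + cf P 3 3 * (x 3 * x 3) + cf P 3 4 * (x 3 * x 4) + cf P 4 4 * (x 4 * x 4) := by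
  rw [rep' P hP x]
  exact sumpairs' fun p => cf P p.1 p.2 * (x p.1 * x p.2)


set_option maxHeartbeats 3200000 in
/-- Any quadratic form in 5 variables vanishing on the ten circles (the spherical
zero set of the Choi–Lam form) is identically zero. -/
theorem stmt5 (P : MvPolynomial (Fin 5) ℝ) (hP : P.IsHomogeneous 2)
    (hvan : ∀ x : Fin 5 → ℝ, inTenCircles x → eval x P = 0) : P = 0 := by
  set u : ℝ := 1 / Real.sqrt 2 with hu
  have hu2 : u * u = 1 / 2 := by
    rw [hu, div_mul_div_comm, Real.mul_self_sqrt (by norm_num)]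
    norm_num
  clear_value u
  have hA0 : cf P 0 0 * (u * u) + cf P 0 1 * (u * u) + cf P 1 1 * (u * u) = 0 := by
    have h := hvan ![u, u, 0, 0, 0] ⟨0, (1:ℝ), by norm_num, by norm_num [hu, neg_div, one_div], by rw [show ((0:Fin 5)+2) = 2 by decide]; norm_num, by rw [show ((0:Fin 5)+3) = 3 by decide]; norm_num, by rw [show ((0:Fin 5)+1) = 1 by decide, show ((0:Fin 5)+4) = 4 by decide]; norm_num [hu, div_pow, Real.sq_sqrt]⟩
    rw [hrep' P hP] at h
    norm_num at h
    linear_combination h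
  have hB0 : cf P 0 0 * (-u * -u) + cf P 0 1 * (-u * u) + cf P 1 1 * (u * u) = 0 := by
    have h := hvan ![-u, u, 0, 0, 0] ⟨0, (-1:ℝ), by norm_num, by norm_num [hu, neg_div, one_div], by rw [show ((0:Fin 5)+2) = 2 by decide]; norm_num, by rw [show ((0:Fin 5)+3) = 3 by decide]; norm_num, by rw [show ((0:Fin 5)+1) = 1 by decide, show ((0:Fin 5)+4) = 4 by decide]; norm_num [hu, div_pow, Real.sq_sqrt]⟩
    rw [hrep' P hP] at h
    norm_num at h
    linear_combination h
  have hC0 : cf P 0 0 * (u * u) + cf P 0 1 * (u * (1/2:ℝ)) + cf P 0 4 * (u * (1/2:ℝ)) + cf P 1 1 * ((1/2:ℝ) * (1/2:ℝ)) + cf P 1 4 * ((1/2:ℝ) * (1/2:ℝ)) + cf P 4 4 * ((1/2:ℝ) * (1/2:ℝ)) = 0 := by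
    have h := hvan ![u, (1/2:ℝ), 0, 0, (1/2:ℝ)] ⟨0, (1:ℝ), by norm_num, by norm_num [hu, neg_div, one_div], by rw [show ((0:Fin 5)+2) = 2 by decide]; norm_num, by rw [show ((0:Fin 5)+3) = 3 by decide]; norm_num, by rw [show ((0:Fin 5)+1) = 1 by decide, show ((0:Fin 5)+4) = 4 by decide]; norm_num [hu, div_pow, Real.sq_sqrt]⟩
    rw [hrep' P hP] at h
    norm_num at h
    linear_combination h
  have hD0 : cf P 0 0 * (u * u) + cf P 0 1 * (u * (1/2:ℝ)) + cf P 0 4 * (u * -(1/2:ℝ)) + cf P 1 1 * ((1/2:ℝ) * (1/2:ℝ)) + cf P 1 4 * ((1/2:ℝ) * -(1/2:ℝ)) + cf P 4 4 * (-(1/2:ℝ) * -(1/2:ℝ)) = 0 := by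
    have h := hvan ![u, (1/2:ℝ), 0, 0, -(1/2:ℝ)] ⟨0, (1:ℝ), by norm_num, by norm_num [hu, neg_div, one_div], by rw [show ((0:Fin 5)+2) = 2 by decide]; norm_num, by rw [show ((0:Fin 5)+3) = 3 by decide]; norm_num, by rw [show ((0:Fin 5)+1) = 1 by decide, show ((0:Fin 5)+4) = 4 by decide]; norm_num [hu, div_pow, Real.sq_sqrt]⟩
    rw [hrep' P hP] at h
    norm_num at h
    linear_combination h
  have hA1 : cf P 1 1 * (u * u) + cf P 1 2 * (u * u) + cf P 2 2 * (u * u) = 0 := by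
    have h := hvan ![0, u, u, 0, 0] ⟨1, (1:ℝ), by norm_num, by norm_num [hu, neg_div, one_div], by rw [show ((1:Fin 5)+2) = 3 by decide]; norm_num, by rw [show ((1:Fin 5)+3) = 4 by decide]; norm_num, by rw [show ((1:Fin 5)+1) = 2 by decide, show ((1:Fin 5)+4) = 0 by decide]; norm_num [hu, div_pow, Real.sq_sqrt]⟩
    rw [hrep' P hP] at h
    norm_num at h
    linear_combination h
  have hB1 : cf P 1 1 * (-u * -u) + cf P 1 2 * (-u * u) + cf P 2 2 * (u * u) = 0 := by
    have h := hvan ![0, -u, u, 0, 0] ⟨1, (-1:ℝ), by norm_num, by norm_num [hu, neg_div, one_div], by rw [show ((1:Fin 5)+2) = 3 by decide]; norm_num, by rw [show ((1:Fin 5)+3) = 4 by decide]; norm_num, by rw [show ((1:Fin 5)+1) = 2 by decide, show ((1:Fin 5)+4) = 0 by decide]; norm_num [hu, div_pow, Real.sq_sqrt]⟩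
    rw [hrep' P hP] at h
    norm_num at h
    linear_combination h
  have hC1 : cf P 0 0 * ((1/2:ℝ) * (1/2:ℝ)) + cf P 0 1 * ((1/2:ℝ) * u) + cf P 0 2 * ((1/2:ℝ) * (1/2:ℝ)) + cf P 1 1 * (u * u) + cf P 1 2 * (u * (1/2:ℝ)) + cf P 2 2 * ((1/2:ℝ) * (1/2:ℝ)) = 0 := by
    have h := hvan ![(1/2:ℝ), u, (1/2:ℝ), 0, 0] ⟨1, (1:ℝ), by norm_num, by norm_num [hu, neg_div, one_div], by rw [show ((1:Fin 5)+2) = 3 by decide]; norm_num, by rw [show ((1:Fin 5)+3) = 4 by decide]; norm_num, by rw [show ((1:Fin 5)+1) = 2 by decide, show ((1:Fin 5)+4) = 0 by decide]; norm_num [hu, div_pow, Real.sq_sqrt]⟩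
    rw [hrep' P hP] at h
    norm_num at h
    linear_combination h
  have hD1 : cf P 0 0 * (-(1/2:ℝ) * -(1/2:ℝ)) + cf P 0 1 * (-(1/2:ℝ) * u) + cf P 0 2 * (-(1/2:ℝ) * (1/2:ℝ)) + cf P 1 1 * (u * u) + cf P 1 2 * (u * (1/2:ℝ)) + cf P 2 2 * ((1/2:ℝ) * (1/2:ℝ)) = 0 := by
    have h := hvan ![-(1/2:ℝ), u, (1/2:ℝ), 0, 0] ⟨1, (1:ℝ), by norm_num, by norm_num [hu, neg_div, one_div], by rw [show ((1:Fin 5)+2) = 3 by decide]; norm_num, by rw [show ((1:Fin 5)+3) = 4 by decide]; norm_num, by rw [show ((1:Fin 5)+1) = 2 by decide, show ((1:Fin 5)+4) = 0 by decide]; norm_num [hu, div_pow, Real.sq_sqrt]⟩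
    rw [hrep' P hP] at h
    norm_num at h
    linear_combination h
  have hA2 : cf P 2 2 * (u * u) + cf P 2 3 * (u * u) + cf P 3 3 * (u * u) = 0 := by
    have h := hvan ![0, 0, u, u, 0] ⟨2, (1:ℝ), by norm_num, by norm_num [hu, neg_div, one_div], by rw [show ((2:Fin 5)+2) = 4 by decide]; norm_num, by rw [show ((2:Fin 5)+3) = 0 by decide]; norm_num, by rw [show ((2:Fin 5)+1) = 3 by decide, show ((2:Fin 5)+4) = 1 by decide]; norm_num [hu, div_pow, Real.sq_sqrt]⟩
    rw [hrep' P hP] at h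
    norm_num at h
    linear_combination h
  have hB2 : cf P 2 2 * (-u * -u) + cf P 2 3 * (-u * u) + cf P 3 3 * (u * u) = 0 := by
    have h := hvan ![0, 0, -u, u, 0] ⟨2, (-1:ℝ), by norm_num, by norm_num [hu, neg_div, one_div], by rw [show ((2:Fin 5)+2) = 4 by decide]; norm_num, by rw [show ((2:Fin 5)+3) = 0 by decide]; norm_num, by rw [show ((2:Fin 5)+1) = 3 by decide, show ((2:Fin 5)+4) = 1 by decide]; norm_num [hu, div_pow, Real.sq_sqrt]⟩
    rw [hrep' P hP] at h
    norm_num at h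
    linear_combination h
  have hC2 : cf P 1 1 * ((1/2:ℝ) * (1/2:ℝ)) + cf P 1 2 * ((1/2:ℝ) * u) + cf P 1 3 * ((1/2:ℝ) * (1/2:ℝ)) + cf P 2 2 * (u * u) + cf P 2 3 * (u * (1/2:ℝ)) + cf P 3 3 * ((1/2:ℝ) * (1/2:ℝ)) = 0 := by
    have h := hvan ![0, (1/2:ℝ), u, (1/2:ℝ), 0] ⟨2, (1:ℝ), by norm_num, by norm_num [hu, neg_div, one_div], by rw [show ((2:Fin 5)+2) = 4 by decide]; norm_num, by rw [show ((2:Fin 5)+3) = 0 by decide]; norm_num, by rw [show ((2:Fin 5)+1) = 3 by decide, show ((2:Fin 5)+4) = 1 by decide]; norm_num [hu, div_pow, Real.sq_sqrt]⟩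
    rw [hrep' P hP] at h
    norm_num at h
    linear_combination h
  have hD2 : cf P 1 1 * (-(1/2:ℝ) * -(1/2:ℝ)) + cf P 1 2 * (-(1/2:ℝ) * u) + cf P 1 3 * (-(1/2:ℝ) * (1/2:ℝ)) + cf P 2 2 * (u * u) + cf P 2 3 * (u * (1/2:ℝ)) + cf P 3 3 * ((1/2:ℝ) * (1/2:ℝ)) = 0 := by
    have h := hvan ![0, -(1/2:ℝ), u, (1/2:ℝ), 0] ⟨2, (1:ℝ), by norm_num, by norm_num [hu, neg_div, one_div], by rw [show ((2:Fin 5)+2) = 4 by decide]; norm_num, by rw [show ((2:Fin 5)+3) = 0 by decide]; norm_num, by rw [show ((2:Fin 5)+1) = 3 by decide, show ((2:Fin 5)+4) = 1 by decide]; norm_num [hu, div_pow, Real.sq_sqrt]⟩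
    rw [hrep' P hP] at h
    norm_num at h
    linear_combination h
  have hA3 : cf P 3 3 * (u * u) + cf P 3 4 * (u * u) + cf P 4 4 * (u * u) = 0 := by
    have h := hvan ![0, 0, 0, u, u] ⟨3, (1:ℝ), by norm_num, by norm_num [hu, neg_div, one_div], by rw [show ((3:Fin 5)+2) = 0 by decide]; norm_num, by rw [show ((3:Fin 5)+3) = 1 by decide]; norm_num, by rw [show ((3:Fin 5)+1) = 4 by decide, show ((3:Fin 5)+4) = 2 by decide]; norm_num [hu, div_pow, Real.sq_sqrt]⟩
    rw [hrep' P hP] at h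
    norm_num at h
    linear_combination h
  have hB3 : cf P 3 3 * (-u * -u) + cf P 3 4 * (-u * u) + cf P 4 4 * (u * u) = 0 := by
    have h := hvan ![0, 0, 0, -u, u] ⟨3, (-1:ℝ), by norm_num, by norm_num [hu, neg_div, one_div], by rw [show ((3:Fin 5)+2) = 0 by decide]; norm_num, by rw [show ((3:Fin 5)+3) = 1 by decide]; norm_num, by rw [show ((3:Fin 5)+1) = 4 by decide, show ((3:Fin 5)+4) = 2 by decide]; norm_num [hu, div_pow, Real.sq_sqrt]⟩
    rw [hrep' P hP] at h
    norm_num at h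
    linear_combination h
  have hC3 : cf P 2 2 * ((1/2:ℝ) * (1/2:ℝ)) + cf P 2 3 * ((1/2:ℝ) * u) + cf P 2 4 * ((1/2:ℝ) * (1/2:ℝ)) + cf P 3 3 * (u * u) + cf P 3 4 * (u * (1/2:ℝ)) + cf P 4 4 * ((1/2:ℝ) * (1/2:ℝ)) = 0 := by
    have h := hvan ![0, 0, (1/2:ℝ), u, (1/2:ℝ)] ⟨3, (1:ℝ), by norm_num, by norm_num [hu, neg_div, one_div], by rw [show ((3:Fin 5)+2) = 0 by decide]; norm_num, by rw [show ((3:Fin 5)+3) = 1 by decide]; norm_num, by rw [show ((3:Fin 5)+1) = 4 by decide, show ((3:Fin 5)+4) = 2 by decide]; norm_num [hu, div_pow, Real.sq_sqrt]⟩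
    rw [hrep' P hP] at h
    norm_num at h
    linear_combination h
  have hD3 : cf P 2 2 * (-(1/2:ℝ) * -(1/2:ℝ)) + cf P 2 3 * (-(1/2:ℝ) * u) + cf P 2 4 * (-(1/2:ℝ) * (1/2:ℝ)) + cf P 3 3 * (u * u) + cf P 3 4 * (u * (1/2:ℝ)) + cf P 4 4 * ((1/2:ℝ) * (1/2:ℝ)) = 0 := by
    have h := hvan ![0, 0, -(1/2:ℝ), u, (1/2:ℝ)] ⟨3, (1:ℝ), by norm_num, by norm_num [hu, neg_div, one_div], by rw [show ((3:Fin 5)+2) = 0 by decide]; norm_num, by rw [show ((3:Fin 5)+3) = 1 by decide]; norm_num, by rw [show ((3:Fin 5)+1) = 4 by decide, show ((3:Fin 5)+4) = 2 by decide]; norm_num [hu, div_pow, Real.sq_sqrt]⟩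
    rw [hrep' P hP] at h
    norm_num at h
    linear_combination h
  have hA4 : cf P 0 0 * (u * u) + cf P 0 4 * (u * u) + cf P 4 4 * (u * u) = 0 := by
    have h := hvan ![u, 0, 0, 0, u] ⟨4, (1:ℝ), by norm_num, by norm_num [hu, neg_div, one_div], by rw [show ((4:Fin 5)+2) = 1 by decide]; norm_num, by rw [show ((4:Fin 5)+3) = 2 by decide]; norm_num, by rw [show ((4:Fin 5)+1) = 0 by decide, show ((4:Fin 5)+4) = 3 by decide]; norm_num [hu, div_pow, Real.sq_sqrt]⟩
    rw [hrep' P hP] at h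
    norm_num at h
    linear_combination h
  have hB4 : cf P 0 0 * (u * u) + cf P 0 4 * (u * -u) + cf P 4 4 * (-u * -u) = 0 := by
    have h := hvan ![u, 0, 0, 0, -u] ⟨4, (-1:ℝ), by norm_num, by norm_num [hu, neg_div, one_div], by rw [show ((4:Fin 5)+2) = 1 by decide]; norm_num, by rw [show ((4:Fin 5)+3) = 2 by decide]; norm_num, by rw [show ((4:Fin 5)+1) = 0 by decide, show ((4:Fin 5)+4) = 3 by decide]; norm_num [hu, div_pow, Real.sq_sqrt]⟩
    rw [hrep' P hP] at h
    norm_num at h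
    linear_combination h
  have hC4 : cf P 0 0 * ((1/2:ℝ) * (1/2:ℝ)) + cf P 0 3 * ((1/2:ℝ) * (1/2:ℝ)) + cf P 0 4 * ((1/2:ℝ) * u) + cf P 3 3 * ((1/2:ℝ) * (1/2:ℝ)) + cf P 3 4 * ((1/2:ℝ) * u) + cf P 4 4 * (u * u) = 0 := by
    have h := hvan ![(1/2:ℝ), 0, 0, (1/2:ℝ), u] ⟨4, (1:ℝ), by norm_num, by norm_num [hu, neg_div, one_div], by rw [show ((4:Fin 5)+2) = 1 by decide]; norm_num, by rw [show ((4:Fin 5)+3) = 2 by decide]; norm_num, by rw [show ((4:Fin 5)+1) = 0 by decide, show ((4:Fin 5)+4) = 3 by decide]; norm_num [hu, div_pow, Real.sq_sqrt]⟩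
    rw [hrep' P hP] at h
    norm_num at h
    linear_combination h
  have hD4 : cf P 0 0 * ((1/2:ℝ) * (1/2:ℝ)) + cf P 0 3 * ((1/2:ℝ) * -(1/2:ℝ)) + cf P 0 4 * ((1/2:ℝ) * u) + cf P 3 3 * (-(1/2:ℝ) * -(1/2:ℝ)) + cf P 3 4 * (-(1/2:ℝ) * u) + cf P 4 4 * (u * u) = 0 := by
    have h := hvan ![(1/2:ℝ), 0, 0, -(1/2:ℝ), u] ⟨4, (1:ℝ), by norm_num, by norm_num [hu, neg_div, one_div], by rw [show ((4:Fin 5)+2) = 1 by decide]; norm_num, by rw [show ((4:Fin 5)+3) = 2 by decide]; norm_num, by rw [show ((4:Fin 5)+1) = 0 by decide, show ((4:Fin 5)+4) = 3 by decide]; norm_num [hu, div_pow, Real.sq_sqrt]⟩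
    rw [hrep' P hP] at h
    norm_num at h
    linear_combination h
  have hc01 : cf P 0 1 = 0 := by
    linear_combination hA0 - hB0 - 2 * cf P 0 1 * hu2
  have hc12 : cf P 1 2 = 0 := by
    linear_combination hA1 - hB1 - 2 * cf P 1 2 * hu2
  have hc23 : cf P 2 3 = 0 := by
    linear_combination hA2 - hB2 - 2 * cf P 2 3 * hu2
  have hc34 : cf P 3 4 = 0 := by
    linear_combination hA3 - hB3 - 2 * cf P 3 4 * hu2
  have hc04 : cf P 0 4 = 0 := by
    linear_combination hA4 - hB4 - 2 * cf P 0 4 * hu2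
  have hd0 : cf P 0 0 + cf P 1 1 = 0 := by
    linear_combination hA0 + hB0 - 2 * (cf P 0 0 + cf P 1 1) * hu2
  have hd1 : cf P 1 1 + cf P 2 2 = 0 := by
    linear_combination hA1 + hB1 - 2 * (cf P 1 1 + cf P 2 2) * hu2
  have hd2 : cf P 2 2 + cf P 3 3 = 0 := by
    linear_combination hA2 + hB2 - 2 * (cf P 2 2 + cf P 3 3) * hu2
  have hd3 : cf P 3 3 + cf P 4 4 = 0 := by
    linear_combination hA3 + hB3 - 2 * (cf P 3 3 + cf P 4 4) * hu2
  have hd4 : cf P 4 4 + cf P 0 0 = 0 := by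
    linear_combination hA4 + hB4 - 2 * (cf P 4 4 + cf P 0 0) * hu2
  have hc00 : cf P 0 0 = 0 := by linarith only [hd0, hd1, hd2, hd3, hd4]
  have hc11 : cf P 1 1 = 0 := by linarith only [hd0, hd1, hd2, hd3, hd4]
  have hc22 : cf P 2 2 = 0 := by linarith only [hd0, hd1, hd2, hd3, hd4]
  have hc33 : cf P 3 3 = 0 := by linarith only [hd0, hd1, hd2, hd3, hd4]
  have hc44 : cf P 4 4 = 0 := by linarith only [hd0, hd1, hd2, hd3, hd4]
  have hc14 : cf P 1 4 = 0 := by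
    linear_combination 2 * hC0 - 2 * hD0 - 2 * u * hc04
  have hc02 : cf P 0 2 = 0 := by
    linear_combination 2 * hC1 - 2 * hD1 - 2 * u * hc01
  have hc13 : cf P 1 3 = 0 := by
    linear_combination 2 * hC2 - 2 * hD2 - 2 * u * hc12
  have hc24 : cf P 2 4 = 0 := by
    linear_combination 2 * hC3 - 2 * hD3 - 2 * u * hc23
  have hc03 : cf P 0 3 = 0 := by
    linear_combination 2 * hC4 - 2 * hD4 - 2 * u * hc34
  have hall : ∀ p : Fin 5 × Fin 5, p.1 ≤ p.2 → cf P p.1 p.2 = 0 := by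
    intro p hp
    fin_cases p <;> first | exact hc00 | exact hc01 | exact hc02 | exact hc03 | exact hc04 | exact hc11 | exact hc12 | exact hc13 | exact hc14 | exact hc22 | exact hc23 | exact hc24 | exact hc33 | exact hc34 | exact hc44 | exact absurd hp (by decide)
  ext m
  rw [coeff_zero]
  by_cases hdeg : ∑ i, m i = 2
  · obtain ⟨i, j, hij, rfl⟩ := classify' m hdeg
    exact hall (i, j) hij
  · apply hP.coeff_eq_zero
    rw [show m.degree = ∑ i, m i from Finset.sum_subset (Finset.subset_univ _) (by simp)]
    exact hdeg
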